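/- The map Φ sending f in the trace space of A = ℝ⟨x,y⟩ to the derivation u_f of A defined by u_f(x) = ∂_y^{tr}(f), u_f(y) = −∂_x^{tr}(f) has kernel spanned by tr(1), and its image is exactly the space of symplectic derivations Der_ω(A) = { u ∈ Der(A) : u([x,y]) = 0 }. Hence F(A)/ℝ·tr(1) ≅ Der_ω(A). -/

import Mathlib

noncomputable section
open TensorProduct

abbrev A : Type := FreeAlgebra ℝ (Fin 2)
abbrev B : Type := A ⊗[ℝ] A

def X : A := FreeAlgebra.ι ℝ 0
def Y : A := FreeAlgebra.ι ℝ 1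

/-- Generator matrices used to define the noncommutative partial derivative `pd d`. -/
def genMat (d i : Fin 2) : Matrix (Fin 2) (Fin 2) B :=
  !![(Algebra.TensorProduct.includeLeft : A →ₐ[ℝ] B) (FreeAlgebra.ι ℝ i), if i = d then 1 else 0;
     0, Algebra.TensorProduct.includeRight (FreeAlgebra.ι ℝ i)]

def Φmat (d : Fin 2) : A →ₐ[ℝ] Matrix (Fin 2) (Fin 2) B :=
  FreeAlgebra.lift ℝ (genMat d)

/-- The noncommutative partial derivative `∂_x` (for `d = 0`) resp. `∂_y` (for `d = 1`):
on a monomial it splits the word at each occurrence of the letter `d`. -/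
def pd (d : Fin 2) (a : A) : B := Φmat d a 0 1

/-- The subspace `[A,A]` spanned by commutators; `tr(A) = A/[A,A]` is the trace space. -/
def commSub : Submodule ℝ A := Submodule.span ℝ {p : A | ∃ a b : A, p = a * b - b * a}

/-- The trace projection `tr : A → A/[A,A]`. -/
def trc (a : A) : A ⧸ commSub := Submodule.Quotient.mk a

/-- Reversed multiplication `μ_flip : A ⊗ A → A`, `b ⊗ c ↦ c·b`. -/
def flipMul : B →ₗ[ℝ] A :=
  (LinearMap.mul' ℝ A).comp (TensorProduct.comm ℝ A A).toLinearMap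

/-!
Write `θ` for the sum of all cyclic rotations of a word and `∂ᵢ` for deleting a leading letter `i`
(zero on words not starting with `i`); then the cyclic derivative `∂ᵢ^{tr}` is `∂ᵢ ∘ θ`. Every
`c` splits by its first letter as `c = ε(c) + Σᵢ xᵢ ∂ᵢc`, and its rotation is `ε(c) + Σᵢ (∂ᵢc) xᵢ`.
* If all cyclic derivatives of `f` vanish, then `θ f = 0`; as `θ` multiplies the trace of a word
  of length `m` by `m`, `tr f` is a multiple of `tr 1`.
* `θ f` is rotation invariant, which says `Σᵢ [∂ᵢ^{tr} f, xᵢ] = 0`, i.e. `u_f(ω) = 0`.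
* If `u(ω) = 0`, then `ζ = y u(x) - x u(y)` is rotation invariant without constant term, and
  dividing the degree `m` component of `ζ` by `m` gives `f` with `θ f = ζ`, so that
  `(∂ₓ^{tr} f, ∂_y^{tr} f) = (-u(y), u(x))`.
-/

namespace FreeAlgebra

section Triangular

variable {R α S : Type*} [CommSemiring R] [Semiring S] [Algebra R S]

theorem lift_triangular (f g : FreeAlgebra R α →ₐ[R] S) (M : α → Matrix (Fin 2) (Fin 2) S)
    (hM : ∀ x, M x 0 0 = f (ι R x) ∧ M x 1 1 = g (ι R x) ∧ M x 1 0 = 0) (a : FreeAlgebra R α) :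
    lift R M a 0 0 = f a ∧ lift R M a 1 1 = g a ∧ lift R M a 1 0 = 0 := by
  induction a using FreeAlgebra.induction with
  | grade0 r => simp [Matrix.algebraMap_matrix_apply]
  | grade1 x => simpa using hM x
  | mul a b ha hb => simp [Matrix.mul_apply, Fin.sum_univ_two, ha, hb]
  | add a b ha hb => simp [ha, hb]

theorem lift_mul_apply_zero_one (f g : FreeAlgebra R α →ₐ[R] S) (M : α → Matrix (Fin 2) (Fin 2) S)
    (hM : ∀ x, M x 0 0 = f (ι R x) ∧ M x 1 1 = g (ι R x) ∧ M x 1 0 = 0) (a b : FreeAlgebra R α) :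
    lift R M (a * b) 0 1 = f a * lift R M b 0 1 + lift R M a 0 1 * g b := by
  rw [map_mul, Matrix.mul_apply, Fin.sum_univ_two, (lift_triangular f g M hM a).1,
    (lift_triangular f g M hM b).2.1]

def liftDeriv (v : α → FreeAlgebra R α) : FreeAlgebra R α →ₗ[R] FreeAlgebra R α :=
  Matrix.entryLinearMap R _ 0 1 ∘ₗ (lift R fun x => !![ι R x, v x; 0, ι R x]).toLinearMap

theorem liftDeriv_ι (v : α → FreeAlgebra R α) (x : α) : liftDeriv v (ι R x) = v x := by
  simp [liftDeriv]

theorem liftDeriv_mul (v : α → FreeAlgebra R α) (a b : FreeAlgebra R α) :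
    liftDeriv v (a * b) = liftDeriv v a * b + a * liftDeriv v b :=
  (lift_mul_apply_zero_one (AlgHom.id R _) (AlgHom.id R _) _ (fun x => by simp) a b).trans
    (add_comm _ _)

end Triangular

section Words

variable {R α : Type*} [CommSemiring R]

variable (R α) in
def wordBasis : Module.Basis (List α) R (FreeAlgebra R α) :=
  (basisFreeMonoid R α).reindex FreeMonoid.toList

theorem wordBasis_eq_prod (w : List α) : wordBasis R α w = (w.map (ι R)).prod := by
  simp [wordBasis, basisFreeMonoid, ← MonoidAlgebra.of_apply, equivMonoidAlgebraFreeMonoid,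
    MonoidAlgebra.lift_of, FreeMonoid.lift_ofList]

@[simp]
theorem wordBasis_nil : wordBasis R α [] = 1 := by
  simp [wordBasis_eq_prod]

@[simp]
theorem wordBasis_cons (x : α) (w : List α) :
    wordBasis R α (x :: w) = ι R x * wordBasis R α w := by
  simp [wordBasis_eq_prod]

theorem wordBasis_append (v w : List α) :
    wordBasis R α (v ++ w) = wordBasis R α v * wordBasis R α w := by
  simp [wordBasis_eq_prod]

theorem algebraMapInv_wordBasis (w : List α) :
    algebraMapInv (wordBasis R α w) = if w = [] then 1 else 0 := by
  cases w <;> simp [algebraMapInv]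

def rotate : FreeAlgebra R α →ₗ[R] FreeAlgebra R α :=
  (wordBasis R α).constr R fun w => wordBasis R α (w.rotate 1)

@[simp]
theorem rotate_wordBasis (w : List α) : rotate (wordBasis R α w) = wordBasis R α (w.rotate 1) :=
  (wordBasis R α).constr_basis R _ w

theorem rotate_pow_wordBasis (j : ℕ) (w : List α) :
    (rotate ^ j) (wordBasis R α w) = wordBasis R α (w.rotate j) := by
  induction j with
  | zero => simp
  | succ j ih => rw [pow_succ', Module.End.mul_apply, ih, rotate_wordBasis, List.rotate_rotate]

theorem rotate_one : rotate (1 : FreeAlgebra R α) = 1 := by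
  simpa using rotate_wordBasis (R := R) ([] : List α)

theorem rotate_ι_mul (x : α) (c : FreeAlgebra R α) : rotate (ι R x * c) = c * ι R x := by
  have : rotate ∘ₗ LinearMap.mulLeft R (ι R x) = LinearMap.mulRight R (ι R x) :=
    (wordBasis R α).ext fun w => by
      rw [LinearMap.comp_apply, LinearMap.mulLeft_apply, ← wordBasis_cons, rotate_wordBasis,
        List.rotate_cons_succ, List.rotate_zero]
      simp [wordBasis_append]
  exact LinearMap.congr_fun this c

def cyclicSum : FreeAlgebra R α →ₗ[R] FreeAlgebra R α :=
  (wordBasis R α).constr R fun w => ∑ k ∈ Finset.range w.length, wordBasis R α (w.rotate k)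

theorem cyclicSum_wordBasis (w : List α) :
    cyclicSum (wordBasis R α w) = ∑ k ∈ Finset.range w.length, wordBasis R α (w.rotate k) :=
  (wordBasis R α).constr_basis R _ w

theorem cyclicSum_one : cyclicSum (1 : FreeAlgebra R α) = 0 := by
  simpa using cyclicSum_wordBasis (R := R) ([] : List α)

theorem rotate_cyclicSum (c : FreeAlgebra R α) : rotate (cyclicSum c) = cyclicSum c := by
  have : rotate ∘ₗ cyclicSum = (cyclicSum : FreeAlgebra R α →ₗ[R] _) :=
    (wordBasis R α).ext fun w => by
      simp only [LinearMap.comp_apply, cyclicSum_wordBasis, map_sum, rotate_wordBasis,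
        List.rotate_rotate]
      cases hw : w.length with
      | zero => simp
      | succ n =>
        rw [Finset.sum_range_succ, Finset.sum_range_succ', ← hw, List.rotate_length,
          List.rotate_zero]
  exact LinearMap.congr_fun this c

theorem algebraMapInv_cyclicSum (c : FreeAlgebra R α) : algebraMapInv (cyclicSum c) = 0 := by
  have : algebraMapInv.toLinearMap ∘ₗ cyclicSum = (0 : FreeAlgebra R α →ₗ[R] R) :=
    (wordBasis R α).ext fun w => by
      simp only [LinearMap.comp_apply, AlgHom.toLinearMap_apply, cyclicSum_wordBasis, map_sum,
        algebraMapInv_wordBasis, List.rotate_eq_nil_iff]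
      rcases w with _ | ⟨x, w⟩ <;> simp
  exact LinearMap.congr_fun this c

section LeftQuotient

variable [DecidableEq α]

def leftQuotient (x : α) : FreeAlgebra R α →ₗ[R] FreeAlgebra R α :=
  (wordBasis R α).constr R fun w => if w.head? = some x then wordBasis R α w.tail else 0

theorem leftQuotient_wordBasis (x : α) (w : List α) :
    leftQuotient x (wordBasis R α w) = if w.head? = some x then wordBasis R α w.tail else 0 :=
  (wordBasis R α).constr_basis R _ w

theorem leftQuotient_one (x : α) : leftQuotient x (1 : FreeAlgebra R α) = 0 := by
  simpa using leftQuotient_wordBasis (R := R) x []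

theorem leftQuotient_ι_mul (x y : α) (c : FreeAlgebra R α) :
    leftQuotient x (ι R y * c) = if y = x then c else 0 := by
  have : leftQuotient x ∘ₗ LinearMap.mulLeft R (ι R y) = if y = x then LinearMap.id else 0 :=
    (wordBasis R α).ext fun w => by
      rw [LinearMap.comp_apply, LinearMap.mulLeft_apply, ← wordBasis_cons, leftQuotient_wordBasis]
      split_ifs <;> simp_all
  have h := LinearMap.congr_fun this c
  split_ifs at h ⊢ <;> simpa using h

variable [Fintype α]

theorem eq_algebraMap_add_sum_ι_mul_leftQuotient (c : FreeAlgebra R α) :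
    c = algebraMap R _ (algebraMapInv c) + ∑ x, ι R x * leftQuotient x c := by
  have : LinearMap.id = (Algebra.linearMap R _ ∘ₗ algebraMapInv.toLinearMap) +
      ∑ x, LinearMap.mulLeft R (ι R x) ∘ₗ (leftQuotient x : FreeAlgebra R α →ₗ[R] _) :=
    (wordBasis R α).ext fun w => by
      rcases w with _ | ⟨y, w⟩ <;> simp [leftQuotient_one, leftQuotient_ι_mul, algebraMapInv]
  simpa using LinearMap.congr_fun this c

theorem rotate_eq_algebraMap_add_sum_leftQuotient_mul_ι (c : FreeAlgebra R α) :
    rotate c = algebraMap R _ (algebraMapInv c) + ∑ x, leftQuotient x c * ι R x := by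
  conv_lhs => rw [eq_algebraMap_add_sum_ι_mul_leftQuotient c]
  simp [map_sum, rotate_ι_mul, Algebra.algebraMap_eq_smul_one, rotate_one]

theorem eq_zero_of_leftQuotient_eq_zero {c : FreeAlgebra R α} (h0 : algebraMapInv c = 0)
    (h : ∀ x, leftQuotient x c = 0) : c = 0 := by
  rw [eq_algebraMap_add_sum_ι_mul_leftQuotient c]
  simp [h0, h]

theorem sum_leftQuotient_cyclicSum_mul_ι_eq (c : FreeAlgebra R α) :
    ∑ x, leftQuotient x (cyclicSum c) * ι R x = ∑ x, ι R x * leftQuotient x (cyclicSum c) := by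
  have hrot := rotate_eq_algebraMap_add_sum_leftQuotient_mul_ι (cyclicSum c)
  have hdec := eq_algebraMap_add_sum_ι_mul_leftQuotient (cyclicSum c)
  rw [rotate_cyclicSum] at hrot
  rw [algebraMapInv_cyclicSum, map_zero, zero_add] at hrot hdec
  rw [← hrot, ← hdec]

end LeftQuotient
def homogeneousComponent (m : ℕ) : FreeAlgebra R α →ₗ[R] FreeAlgebra R α :=
  (wordBasis R α).constr R fun w => if w.length = m then wordBasis R α w else 0

theorem homogeneousComponent_wordBasis (m : ℕ) (w : List α) :
    homogeneousComponent m (wordBasis R α w) = if w.length = m then wordBasis R α w else 0 :=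
  (wordBasis R α).constr_basis R _ w

theorem homogeneousComponent_zero (c : FreeAlgebra R α) :
    homogeneousComponent 0 c = algebraMap R _ (algebraMapInv c) := by
  have : homogeneousComponent 0 = Algebra.linearMap R _ ∘ₗ algebraMapInv.toLinearMap :=
    (wordBasis R α).ext fun w => by
      simp only [LinearMap.comp_apply, homogeneousComponent_wordBasis, AlgHom.toLinearMap_apply,
        algebraMapInv_wordBasis, List.length_eq_zero_iff]
      split_ifs with h <;> simp [h]
  exact LinearMap.congr_fun this c

theorem homogeneousComponent_rotate (m : ℕ) (c : FreeAlgebra R α) :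
    homogeneousComponent m (rotate c) = rotate (homogeneousComponent m c) := by
  have : homogeneousComponent m ∘ₗ rotate = rotate ∘ₗ homogeneousComponent m :=
    (wordBasis R α).ext fun w => by
      simp only [LinearMap.comp_apply, homogeneousComponent_wordBasis, rotate_wordBasis,
        List.length_rotate]
      split_ifs <;> simp
  exact LinearMap.congr_fun this c

theorem cyclicSum_homogeneousComponent (m : ℕ) (c : FreeAlgebra R α) :
    cyclicSum (homogeneousComponent m c) =
      ∑ j ∈ Finset.range m, (rotate ^ j) (homogeneousComponent m c) := by
  have : cyclicSum ∘ₗ homogeneousComponent m =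
      ∑ j ∈ Finset.range m, (rotate ^ j) ∘ₗ homogeneousComponent m :=
    (wordBasis R α).ext fun w => by
      simp only [LinearMap.comp_apply, LinearMap.sum_apply, homogeneousComponent_wordBasis]
      split_ifs with h
      · simp only [cyclicSum_wordBasis, rotate_pow_wordBasis, h]
      · simp
  simpa using LinearMap.congr_fun this c

theorem exists_sum_homogeneousComponent (c : FreeAlgebra R α) :
    ∃ N, ∀ n ≥ N, ∑ m ∈ Finset.range n, homogeneousComponent m c = c := by
  have hc : c ∈ Submodule.span R (Set.range (wordBasis R α)) :=
    (wordBasis R α).span_eq ▸ Submodule.mem_top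
  induction hc using Submodule.span_induction with
  | mem c hc =>
    obtain ⟨w, rfl⟩ := hc
    refine ⟨w.length + 1, fun n hn => ?_⟩
    simp only [homogeneousComponent_wordBasis, Finset.sum_ite_eq, Finset.mem_range]
    exact if_pos (by omega)
  | zero => exact ⟨0, fun n _ => by simp⟩
  | add a b _ _ ha hb =>
    obtain ⟨Na, ha⟩ := ha
    obtain ⟨Nb, hb⟩ := hb
    refine ⟨max Na Nb, fun n hn => ?_⟩
    simp only [map_add, Finset.sum_add_distrib, ha n (le_of_max_le_left hn),
      hb n (le_of_max_le_right hn)]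
  | smul r a _ ha =>
    obtain ⟨N, ha⟩ := ha
    exact ⟨N, fun n hn => by simp only [map_smul, ← Finset.smul_sum, ha n hn]⟩

theorem trace_wordBasis_rotate {M : Type*} [AddCommMonoid M] [Module R M]
    (t : FreeAlgebra R α →ₗ[R] M) (ht : ∀ a b, t (a * b) = t (b * a)) (w : List α) (k : ℕ) :
    t (wordBasis R α (w.rotate k)) = t (wordBasis R α w) := by
  rw [List.rotate_eq_drop_append_take_mod, wordBasis_append, ht, ← wordBasis_append,
    List.take_append_drop]

end Words

section Field

variable {K α : Type*} [Field K]

def divDegree : FreeAlgebra K α →ₗ[K] FreeAlgebra K α :=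
  (wordBasis K α).constr K fun w => (w.length : K)⁻¹ • wordBasis K α w

theorem divDegree_wordBasis (w : List α) :
    divDegree (wordBasis K α w) = (w.length : K)⁻¹ • wordBasis K α w :=
  (wordBasis K α).constr_basis K _ w

theorem divDegree_homogeneousComponent (m : ℕ) (c : FreeAlgebra K α) :
    divDegree (homogeneousComponent m c) = (m : K)⁻¹ • homogeneousComponent m c := by
  have : divDegree ∘ₗ homogeneousComponent m =
      (m : K)⁻¹ • homogeneousComponent (R := K) (α := α) m :=
    (wordBasis K α).ext fun w => by
      simp only [LinearMap.comp_apply, LinearMap.smul_apply, homogeneousComponent_wordBasis]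
      split_ifs with h
      · rw [divDegree_wordBasis, h]
      · simp
  exact LinearMap.congr_fun this c

theorem cyclicSum_divDegree_of_rotate_eq [CharZero K] {c : FreeAlgebra K α} (hc : rotate c = c) :
    cyclicSum (divDegree c) = c - algebraMap K _ (algebraMapInv c) := by
  have hfix (m j : ℕ) : (rotate ^ j) (homogeneousComponent m c) = homogeneousComponent m c := by
    induction j with
    | zero => rfl
    | succ j ih => rw [pow_succ', Module.End.mul_apply, ih, ← homogeneousComponent_rotate, hc]
  have hdeg (m : ℕ) : cyclicSum (divDegree (homogeneousComponent m c)) =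
      if m = 0 then 0 else homogeneousComponent m c := by
    rw [divDegree_homogeneousComponent, map_smul, cyclicSum_homogeneousComponent]
    split_ifs with hm
    · simp [hm]
    · rw [Finset.sum_congr rfl fun j _ => hfix m j, Finset.sum_const, Finset.card_range,
        ← Nat.cast_smul_eq_nsmul K, smul_smul, inv_mul_cancel₀ (Nat.cast_ne_zero.2 hm), one_smul]
  obtain ⟨N, hN⟩ := exists_sum_homogeneousComponent c
  have hsum := hN (N + 1) (by omega)
  rw [Finset.sum_range_succ', homogeneousComponent_zero] at hsum
  conv_lhs => rw [← hN (N + 1) (by omega), map_sum, map_sum, Finset.sum_range_succ']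
  simp only [hdeg, Nat.succ_ne_zero, if_false, if_true, add_zero]
  exact eq_sub_of_add_eq hsum

theorem trace_divDegree_cyclicSum [CharZero K] {M : Type*} [AddCommGroup M] [Module K M]
    (t : FreeAlgebra K α →ₗ[K] M) (ht : ∀ a b, t (a * b) = t (b * a)) (c : FreeAlgebra K α) :
    t (divDegree (cyclicSum c)) = t c - algebraMapInv c • t 1 := by
  have : t ∘ₗ divDegree ∘ₗ cyclicSum = t - algebraMapInv.toLinearMap.smulRight (t 1) :=
    (wordBasis K α).ext fun w => by
      rcases eq_or_ne w [] with rfl | hw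
      · simp [cyclicSum_one]
      · have hlen : (w.length : K) ≠ 0 := by simpa using hw
        simp only [LinearMap.comp_apply, cyclicSum_wordBasis, map_sum, divDegree_wordBasis,
          List.length_rotate, map_smul, trace_wordBasis_rotate t ht, Finset.sum_const,
          Finset.card_range, LinearMap.sub_apply, LinearMap.coe_smulRight,
          AlgHom.toLinearMap_apply, algebraMapInv_wordBasis, hw, if_false, zero_smul, sub_zero]
        rw [← Nat.cast_smul_eq_nsmul K, smul_smul, mul_inv_cancel₀ hlen, one_smul]
  simpa using LinearMap.congr_fun this c

variable [DecidableEq α] [Fintype α] [CharZero K]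

theorem trace_eq_of_leftQuotient_cyclicSum_eq_zero {M : Type*} [AddCommGroup M] [Module K M]
    (t : FreeAlgebra K α →ₗ[K] M) (ht : ∀ a b, t (a * b) = t (b * a)) {c : FreeAlgebra K α}
    (h : ∀ x, leftQuotient x (cyclicSum c) = 0) : t c = algebraMapInv c • t 1 := by
  have hc : cyclicSum c = 0 := eq_zero_of_leftQuotient_eq_zero (algebraMapInv_cyclicSum c) h
  have := trace_divDegree_cyclicSum t ht c
  rwa [hc, map_zero, map_zero, eq_comm, sub_eq_zero] at this

theorem exists_leftQuotient_cyclicSum_eq (p : α → FreeAlgebra K α)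
    (hp : ∑ x, p x * ι K x = ∑ x, ι K x * p x) :
    ∃ a, ∀ x, leftQuotient x (cyclicSum a) = p x := by
  set ζ := ∑ x, ι K x * p x
  have hζ : ∀ x, leftQuotient x ζ = p x := by simp [ζ, map_sum, leftQuotient_ι_mul]
  have hζ₀ : algebraMapInv ζ = 0 := by simp [ζ, algebraMapInv]
  have hrot : rotate ζ = ζ := by
    rw [rotate_eq_algebraMap_add_sum_leftQuotient_mul_ι, hζ₀, map_zero, zero_add]
    simpa [hζ] using hp
  refine ⟨divDegree ζ, fun x => ?_⟩
  rw [cyclicSum_divDegree_of_rotate_eq hrot, hζ₀, map_zero, sub_zero, hζ]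

end Field

end FreeAlgebra

open FreeAlgebra

theorem genMat_triangular (d i : Fin 2) :
    genMat d i 0 0 = (Algebra.TensorProduct.includeLeft : A →ₐ[ℝ] B) (ι ℝ i) ∧
      genMat d i 1 1 = Algebra.TensorProduct.includeRight (ι ℝ i) ∧ genMat d i 1 0 = 0 := by
  simp [genMat]

theorem pd_mul (d : Fin 2) (a b : A) : pd d (a * b) = a ⊗ₜ 1 * pd d b + pd d a * (1 ⊗ₜ b) :=
  lift_mul_apply_zero_one _ _ _ (genMat_triangular d) a b

theorem pd_ι (d i : Fin 2) : pd d (ι ℝ i) = if i = d then 1 else 0 := by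
  simp [pd, Φmat, genMat]

theorem pd_wordBasis (d : Fin 2) (w : List (Fin 2)) :
    pd d (wordBasis ℝ _ w) = ∑ k ∈ Finset.range w.length,
      if w[k]? = some d then wordBasis ℝ _ (w.take k) ⊗ₜ wordBasis ℝ _ (w.drop (k + 1)) else 0 := by
  induction w with
  | nil => simp [pd]
  | cons i w ih =>
    rw [wordBasis_cons, pd_mul, pd_ι, ih, Finset.mul_sum, List.length_cons,
      Finset.sum_range_succ']
    congr 1
    · refine Finset.sum_congr rfl fun k _ => ?_
      rw [List.getElem?_cons_succ]
      split_ifs <;> simp [Algebra.TensorProduct.tmul_mul_tmul]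
    · split_ifs <;> simp_all

theorem flipMul_pd (d : Fin 2) (a : A) : flipMul (pd d a) = leftQuotient d (cyclicSum a) := by
  have : flipMul ∘ₗ Matrix.entryLinearMap ℝ B 0 1 ∘ₗ (Φmat d).toLinearMap =
      leftQuotient d ∘ₗ cyclicSum :=
    (wordBasis ℝ _).ext fun w => by
      change flipMul (pd d _) = leftQuotient d (cyclicSum _)
      rw [pd_wordBasis, cyclicSum_wordBasis, map_sum, map_sum]
      refine Finset.sum_congr rfl fun k hk => ?_
      have hk : k < w.length := Finset.mem_range.1 hk
      rw [List.rotate_eq_drop_append_take hk.le, ← List.getElem_cons_drop hk, List.cons_append,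
        wordBasis_cons, leftQuotient_ι_mul, List.getElem?_eq_getElem hk]
      simp only [Option.some_inj]
      split_ifs <;> simp [flipMul, wordBasis_append]
  exact LinearMap.congr_fun this a

/-- A derivation is recorded by its values on the generators, so `u_f = 0` iff
`u_f(x) = u_f(y) = 0`. -/
theorem Phi_kernel_and_image
    (Dx Dy : (A ⧸ commSub) →ₗ[ℝ] A)
    (hDx : ∀ a : A, Dx (trc a) = flipMul (pd 0 a))
    (hDy : ∀ a : A, Dy (trc a) = flipMul (pd 1 a)) :
    -- the kernel of Φ is spanned by tr(1)
    (∀ f : A ⧸ commSub, (Dy f = 0 ∧ Dx f = 0) ↔ ∃ r : ℝ, f = r • trc 1) ∧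
    -- Φ(f) extends to a derivation of A annihilating ω = [x,y]
    (∀ f : A ⧸ commSub, ∃ u : A →ₗ[ℝ] A,
      (∀ a b : A, u (a * b) = u a * b + a * u b) ∧
      u X = Dy f ∧ u Y = -(Dx f) ∧ u (X * Y - Y * X) = 0) ∧
    -- every symplectic derivation is Φ(f) for some cyclic word f
    (∀ u : A →ₗ[ℝ] A, (∀ a b : A, u (a * b) = u a * b + a * u b) →
      u (X * Y - Y * X) = 0 → ∃ f : A ⧸ commSub, u X = Dy f ∧ u Y = -(Dx f)) := by
  have hX (a : A) : Dx (trc a) = leftQuotient 0 (cyclicSum a) := (hDx a).trans (flipMul_pd 0 a)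
  have hY (a : A) : Dy (trc a) = leftQuotient 1 (cyclicSum a) := (hDy a).trans (flipMul_pd 1 a)
  have htrace (a b : A) : commSub.mkQ (a * b) = commSub.mkQ (b * a) :=
    (Submodule.Quotient.eq _).2 (Submodule.subset_span ⟨a, b, rfl⟩)
  refine ⟨fun f => ⟨fun ⟨hfY, hfX⟩ => ?_, ?_⟩, fun f => ?_, fun u hu hω => ?_⟩
  · obtain ⟨a, rfl⟩ := commSub.mkQ_surjective f
    refine ⟨algebraMapInv a, trace_eq_of_leftQuotient_cyclicSum_eq_zero _ htrace ?_⟩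
    exact Fin.forall_fin_two.2 ⟨(hX a).symm.trans hfX, (hY a).symm.trans hfY⟩
  · rintro ⟨r, rfl⟩
    simp [hX, hY, cyclicSum_one]
  · obtain ⟨a, rfl⟩ := commSub.mkQ_surjective f
    refine ⟨liftDeriv ![Dy (trc a), -Dx (trc a)], liftDeriv_mul _, liftDeriv_ι _ 0,
      liftDeriv_ι _ 1, ?_⟩
    have hcomm := sub_eq_zero.2 (sum_leftQuotient_cyclicSum_mul_ι_eq a)
    rw [Fin.sum_univ_two, Fin.sum_univ_two, ← hX, ← hY] at hcomm
    rw [map_sub, liftDeriv_mul, liftDeriv_mul, X, Y, liftDeriv_ι, liftDeriv_ι, ← hcomm]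
    simp only [Matrix.cons_val_zero, Matrix.cons_val_one, mul_neg, neg_mul]
    abel
  · obtain ⟨a, ha⟩ := exists_leftQuotient_cyclicSum_eq ![-u Y, u X] <| by
      rw [← sub_eq_zero, Fin.sum_univ_two, Fin.sum_univ_two, ← hω, map_sub, hu, hu]
      simp only [X, Y, Matrix.cons_val_zero, Matrix.cons_val_one, mul_neg, neg_mul]
      abel
    exact ⟨trc a, by rw [hY, ha 1]; rfl, by rw [hX, ha 0]; simp⟩
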